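/- arXiv:1209.4158 — 2 statements merged into one kernel-verified Lean document; each statement's English description precedes it below -/
import Mathlib

section
/- For a conformal metric e^φ|dz|² of constant curvature −1 on an open set of ℂ (i.e. φ_{zz̄} = (1/2)e^φ), the quantity φ_{zz} − (1/2)φ_z² is holomorphic, i.e. ∂_{z̄}(φ_{zz} − (1/2)φ_z²) = 0. -/
open Complex

/-- The Wirtinger derivative `∂_z f = (f_x - i f_y)/2`. -/
noncomputable def wirtingerZ (f : ℂ → ℂ) (z : ℂ) : ℂ :=
  (fderiv ℝ f z 1 - Complex.I * fderiv ℝ f z Complex.I) / 2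

/-- The conjugate Wirtinger derivative `∂_z̄ f = (f_x + i f_y)/2`. -/
noncomputable def wirtingerZBar (f : ℂ → ℂ) (z : ℂ) : ℂ :=
  (fderiv ℝ f z 1 + Complex.I * fderiv ℝ f z Complex.I) / 2

private lemma cdo_differentiableAt {F : Type*} [NormedAddCommGroup F] [NormedSpace ℝ F]
    {f : ℂ → F} {U : Set ℂ} (hU : IsOpen U)
    (hf : ContDiffOn ℝ (⊤ : ℕ∞) f U) {z : ℂ} (hz : z ∈ U) : DifferentiableAt ℝ f z :=
  ((hf.differentiableOn (by simp)) z hz).differentiableAt (hU.mem_nhds hz)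

private lemma fderiv_apply_differentiableAt {f : ℂ → ℂ} {z : ℂ}
    (hf : DifferentiableAt ℝ (fderiv ℝ f) z) (v : ℂ) :
    DifferentiableAt ℝ (fun w => fderiv ℝ f w v) z :=
  ((ContinuousLinearMap.apply ℝ ℂ v).differentiableAt).comp z hf

private lemma fderiv_fderiv_apply {f : ℂ → ℂ} {z : ℂ}
    (hf : DifferentiableAt ℝ (fderiv ℝ f) z) (v u : ℂ) :
    fderiv ℝ (fun w => fderiv ℝ f w v) z u = fderiv ℝ (fderiv ℝ f) z u v := by
  have h : fderiv ℝ ((ContinuousLinearMap.apply ℝ ℂ v) ∘ (fderiv ℝ f)) z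
      = (ContinuousLinearMap.apply ℝ ℂ v).comp (fderiv ℝ (fderiv ℝ f) z) := by
    rw [fderiv_comp z (ContinuousLinearMap.differentiableAt _) hf,
      ContinuousLinearMap.fderiv]
  have h2 := congrArg (fun L : ℂ →L[ℝ] ℂ => L u) h
  simpa [Function.comp_def] using h2

private lemma contDiffOn_apply_fderiv {f : ℂ → ℂ} {U : Set ℂ} (hU : IsOpen U)
    (hf : ContDiffOn ℝ (⊤ : ℕ∞) f U) (v : ℂ) :
    ContDiffOn ℝ (⊤ : ℕ∞) (fun w => fderiv ℝ f w v) U :=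
  (ContinuousLinearMap.apply ℝ ℂ v).contDiff.comp_contDiffOn
    (hf.fderiv_of_isOpen hU (by simp))

private lemma wirtingerZ_contDiffOn {f : ℂ → ℂ} {U : Set ℂ} (hU : IsOpen U)
    (hf : ContDiffOn ℝ (⊤ : ℕ∞) f U) : ContDiffOn ℝ (⊤ : ℕ∞) (wirtingerZ f) U := by
  unfold wirtingerZ
  exact ((contDiffOn_apply_fderiv hU hf 1).sub
    (contDiffOn_const.mul (contDiffOn_apply_fderiv hU hf I))).div_const 2

private lemma wirtingerZ_differentiableAt {f : ℂ → ℂ} {z : ℂ}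
    (hf : DifferentiableAt ℝ (fderiv ℝ f) z) :
    DifferentiableAt ℝ (wirtingerZ f) z := by
  have hrw : wirtingerZ f = fun w => (2:ℂ)⁻¹ * (fderiv ℝ f w 1 - I * fderiv ℝ f w I) := by
    funext w; unfold wirtingerZ; ring
  rw [hrw]
  exact ((fderiv_apply_differentiableAt hf 1).sub
    ((fderiv_apply_differentiableAt hf I).const_mul I)).const_mul _

private lemma fderiv_wirtingerZ {f : ℂ → ℂ} {z : ℂ}
    (hf : DifferentiableAt ℝ (fderiv ℝ f) z) (u : ℂ) :
    fderiv ℝ (wirtingerZ f) z u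
      = (fderiv ℝ (fderiv ℝ f) z u 1 - I * fderiv ℝ (fderiv ℝ f) z u I) / 2 := by
  have hrw : wirtingerZ f = fun w => (2:ℂ)⁻¹ * (fderiv ℝ f w 1 - I * fderiv ℝ f w I) := by
    funext w; unfold wirtingerZ; ring
  rw [hrw, fderiv_const_mul ((fderiv_apply_differentiableAt hf 1).fun_sub
      ((fderiv_apply_differentiableAt hf I).const_mul I)) ((2:ℂ)⁻¹),
    fderiv_fun_sub (fderiv_apply_differentiableAt hf 1)
      ((fderiv_apply_differentiableAt hf I).const_mul I),
    fderiv_const_mul (fderiv_apply_differentiableAt hf I) I]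
  simp [fderiv_fderiv_apply hf]
  ring

private lemma fderiv_wirtingerZBar {f : ℂ → ℂ} {z : ℂ}
    (hf : DifferentiableAt ℝ (fderiv ℝ f) z) (u : ℂ) :
    fderiv ℝ (wirtingerZBar f) z u
      = (fderiv ℝ (fderiv ℝ f) z u 1 + I * fderiv ℝ (fderiv ℝ f) z u I) / 2 := by
  have hrw : wirtingerZBar f = fun w => (2:ℂ)⁻¹ * (fderiv ℝ f w 1 + I * fderiv ℝ f w I) := by
    funext w; unfold wirtingerZBar; ring
  rw [hrw, fderiv_const_mul ((fderiv_apply_differentiableAt hf 1).fun_add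
      ((fderiv_apply_differentiableAt hf I).const_mul I)) ((2:ℂ)⁻¹),
    fderiv_fun_add (fderiv_apply_differentiableAt hf 1)
      ((fderiv_apply_differentiableAt hf I).const_mul I),
    fderiv_const_mul (fderiv_apply_differentiableAt hf I) I]
  simp [fderiv_fderiv_apply hf]
  ring

private lemma wirtinger_swap {f : ℂ → ℂ} {U : Set ℂ} (hU : IsOpen U)
    (hf : ContDiffOn ℝ (⊤ : ℕ∞) f U) {z : ℂ} (hz : z ∈ U) :
    wirtingerZBar (wirtingerZ f) z = wirtingerZ (wirtingerZBar f) z := by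
  have hd2 : DifferentiableAt ℝ (fderiv ℝ f) z :=
    cdo_differentiableAt hU (hf.fderiv_of_isOpen hU (by simp)) hz
  have hsymm : fderiv ℝ (fderiv ℝ f) z 1 I = fderiv ℝ (fderiv ℝ f) z I 1 := by
    apply second_derivative_symmetric_of_eventually (f := f) (x := z)
    · filter_upwards [hU.mem_nhds hz] with y hy using
        (cdo_differentiableAt hU hf hy).hasFDerivAt
    · exact hd2.hasFDerivAt
  rw [show wirtingerZBar (wirtingerZ f) z
      = (fderiv ℝ (wirtingerZ f) z 1 + I * fderiv ℝ (wirtingerZ f) z I) / 2 from rfl,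
    show wirtingerZ (wirtingerZBar f) z
      = (fderiv ℝ (wirtingerZBar f) z 1 - I * fderiv ℝ (wirtingerZBar f) z I) / 2 from rfl,
    fderiv_wirtingerZ hd2 1, fderiv_wirtingerZ hd2 I,
    fderiv_wirtingerZBar hd2 1, fderiv_wirtingerZBar hd2 I, hsymm]
  ring

private lemma wirtingerZ_congr_nhds {f g : ℂ → ℂ} {z : ℂ} (h : f =ᶠ[nhds z] g) :
    wirtingerZ f z = wirtingerZ g z := by
  unfold wirtingerZ; rw [h.fderiv_eq]

private lemma wirtingerZBar_sub {f g : ℂ → ℂ} {z : ℂ} (hf : DifferentiableAt ℝ f z)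
    (hg : DifferentiableAt ℝ g z) :
    wirtingerZBar (fun w => f w - g w) z = wirtingerZBar f z - wirtingerZBar g z := by
  unfold wirtingerZBar
  rw [fderiv_fun_sub hf hg]
  simp
  ring

private lemma wirtingerZBar_const_mul {f : ℂ → ℂ} {z : ℂ} (c : ℂ)
    (hf : DifferentiableAt ℝ f z) :
    wirtingerZBar (fun w => c * f w) z = c * wirtingerZBar f z := by
  unfold wirtingerZBar
  rw [fderiv_const_mul hf c]
  simp
  ring

private lemma wirtingerZ_const_mul {f : ℂ → ℂ} {z : ℂ} (c : ℂ)
    (hf : DifferentiableAt ℝ f z) :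
    wirtingerZ (fun w => c * f w) z = c * wirtingerZ f z := by
  unfold wirtingerZ
  rw [fderiv_const_mul hf c]
  simp
  ring

private lemma wirtingerZBar_sq {f : ℂ → ℂ} {z : ℂ} (hf : DifferentiableAt ℝ f z) :
    wirtingerZBar (fun w => f w ^ 2) z = 2 * f z * wirtingerZBar f z := by
  unfold wirtingerZBar
  have : (fun w => f w ^ 2) = fun w => f w * f w := by ext w; ring
  rw [this, fderiv_fun_mul hf hf]
  simp
  ring

private lemma wirtingerZ_exp {f : ℂ → ℂ} {z : ℂ} (hf : DifferentiableAt ℝ f z) :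
    wirtingerZ (fun w => Complex.exp (f w)) z = Complex.exp (f z) * wirtingerZ f z := by
  have he : HasFDerivAt Complex.exp
      (((1 : ℂ →L[ℂ] ℂ).smulRight (Complex.exp (f z))).restrictScalars ℝ) (f z) :=
    (Complex.hasDerivAt_exp (f z)).hasFDerivAt.restrictScalars ℝ
  have h : HasFDerivAt (fun w => Complex.exp (f w))
      ((((1 : ℂ →L[ℂ] ℂ).smulRight (Complex.exp (f z))).restrictScalars ℝ).comp
        (fderiv ℝ f z)) z := he.comp z hf.hasFDerivAt
  unfold wirtingerZ
  rw [h.fderiv]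
  simp
  ring

/-- For a conformal metric `e^φ |dz|²` of constant curvature `-1` on an open set of `ℂ`,
i.e. `φ` satisfies the Liouville equation `φ_{z z̄} = (1/2) e^φ`, the quantity
`φ_{zz} - (1/2) φ_z²` is holomorphic: `∂_{z̄} (φ_{zz} - (1/2) φ_z²) = 0`. -/
theorem liouville_gives_holomorphic_quadratic_differential
    (U : Set ℂ) (hU : IsOpen U) (φ : ℂ → ℝ) (hφ : ContDiffOn ℝ (⊤ : ℕ∞) φ U)
    (hLiouville : ∀ z ∈ U,
      wirtingerZBar (fun w => wirtingerZ (fun u => (φ u : ℂ)) w) z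
        = (1 / 2) * Complex.exp (φ z)) :
    ∀ z ∈ U,
      wirtingerZBar (fun w =>
        wirtingerZ (fun u => wirtingerZ (fun v => (φ v : ℂ)) u) w
          - (1 / 2) * (wirtingerZ (fun u => (φ u : ℂ)) w) ^ 2) z = 0 := by
  intro z hz
  set φc : ℂ → ℂ := fun v => (φ v : ℂ) with hφc_def
  have hφc : ContDiffOn ℝ (⊤ : ℕ∞) φc U :=
    Complex.ofRealCLM.contDiff.comp_contDiffOn hφ
  set g : ℂ → ℂ := wirtingerZ φc with hg_def
  have hg : ContDiffOn ℝ (⊤ : ℕ∞) g U := wirtingerZ_contDiffOn hU hφc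
  set h : ℂ → ℂ := wirtingerZ g with hh_def
  have hh : ContDiffOn ℝ (⊤ : ℕ∞) h U := wirtingerZ_contDiffOn hU hg
  have hgd2 : DifferentiableAt ℝ (fderiv ℝ g) z :=
    cdo_differentiableAt hU (hg.fderiv_of_isOpen hU (by simp)) hz
  have hhd : DifferentiableAt ℝ h z := cdo_differentiableAt hU hh hz
  have hgd : DifferentiableAt ℝ g z := cdo_differentiableAt hU hg hz
  have hφcd : DifferentiableAt ℝ φc z := cdo_differentiableAt hU hφc hz
  -- step 1: split
  have step1 : wirtingerZBar (fun w => h w - (1/2) * (g w) ^ 2) z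
      = wirtingerZBar h z - (1/2) * (2 * g z * wirtingerZBar g z) := by
    rw [wirtingerZBar_sub hhd ((hgd.fun_pow 2).const_mul _),
      wirtingerZBar_const_mul _ (hgd.fun_pow 2), wirtingerZBar_sq hgd]
  -- Liouville at z
  have hL : wirtingerZBar g z = (1/2) * Complex.exp (φ z) := hLiouville z hz
  -- step 2: swap and compute the third-derivative term
  have step2 : wirtingerZBar h z = (1/2) * (Complex.exp (φ z) * g z) := by
    have hswap : wirtingerZBar h z = wirtingerZ (wirtingerZBar g) z :=
      wirtinger_swap hU hg hz
    have heq : wirtingerZBar g =ᶠ[nhds z] fun w => (1/2) * Complex.exp (φc w) := by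
      filter_upwards [hU.mem_nhds hz] with w hw using hLiouville w hw
    have hexpd : DifferentiableAt ℝ (fun w => Complex.exp (φc w)) z := by
      have h1 : DifferentiableAt ℂ Complex.exp (φc z) := Complex.differentiable_exp (φc z)
      exact (h1.restrictScalars ℝ).comp z hφcd
    rw [hswap, wirtingerZ_congr_nhds heq, wirtingerZ_const_mul (1/2 : ℂ) hexpd,
      wirtingerZ_exp hφcd]
  have final := step1
  rw [step2, hL] at final
  calc wirtingerZBar (fun w =>
        wirtingerZ (fun u => wirtingerZ (fun v => (φ v : ℂ)) u) w
          - (1 / 2) * (wirtingerZ (fun u => (φ u : ℂ)) w) ^ 2) z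
      = wirtingerZBar (fun w => h w - (1/2) * (g w) ^ 2) z := rfl
    _ = 0 := by rw [final]; ring
end

section
/- The hyperbolic metric potential on a conformally compact end: if r̂(t,x,y) satisfies r̂_t = −(1/2)(r̂_t² + r̂_x² + r̂_y²)·r̂⁻¹·t, r̂ is smooth up to t = 0, r̂ > 0, and lim_{t→0} r̂ = e^{φ/2}, then |r̂(t,x,y) − e^{φ(x,y)/2}| ≤ C·t² for a uniform constant C on compact subsets. -/
/-- Boundary-defining-function estimate for a conformally compact end: if
`r̂(t, x, y)` is smooth up to `t = 0`, positive, equals `e^{φ/2}` at `t = 0`, and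
satisfies `r̂_t = -(t/2)·(r̂_t² + r̂_x² + r̂_y²)/r̂`, then
`|r̂(t,x,y) - e^{φ(x,y)/2}| ≤ C·t²` uniformly on compact subsets of `[0, ε) × Ω`. -/
theorem boundary_defining_function_estimate
    (ε : ℝ) (hε : 0 < ε) (Ω : Set (ℝ × ℝ)) (hΩ : IsOpen Ω)
    (r : ℝ × ℝ × ℝ → ℝ) (hr : ContDiff ℝ (⊤ : ℕ∞) r)
    (φ : ℝ × ℝ → ℝ) (hφ : ContDiffOn ℝ (⊤ : ℕ∞) φ Ω)
    (hpos : ∀ p ∈ Set.Ico (0 : ℝ) ε ×ˢ Ω, 0 < r p)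
    (hinit : ∀ q ∈ Ω, r (0, q) = Real.exp (φ q / 2))
    (hODE : ∀ p ∈ Set.Ico (0 : ℝ) ε ×ˢ Ω,
      fderiv ℝ r p (1, 0, 0)
        = -(p.1 / 2) * ((fderiv ℝ r p (1, 0, 0)) ^ 2 + (fderiv ℝ r p (0, 1, 0)) ^ 2
            + (fderiv ℝ r p (0, 0, 1)) ^ 2) / r p) :
    ∀ K : Set (ℝ × ℝ × ℝ), IsCompact K → K ⊆ Set.Ico (0 : ℝ) ε ×ˢ Ω →
      ∃ C : ℝ, ∀ p ∈ K, |r p - Real.exp (φ p.2 / 2)| ≤ C * p.1 ^ 2 := by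
  intro K hK hKsub
  -- the "cone" over K towards t = 0
  set K' : Set (ℝ × ℝ × ℝ) :=
    (fun q : ℝ × (ℝ × ℝ × ℝ) => (q.1 * q.2.1, q.2.2)) '' (Set.Icc (0:ℝ) 1 ×ˢ K) with hK'def
  have hK'comp : IsCompact K' :=
    (isCompact_Icc.prod hK).image (by fun_prop)
  have hK'sub : K' ⊆ Set.Ico (0 : ℝ) ε ×ˢ Ω := by
    rintro _ ⟨⟨s, p⟩, ⟨hs, hp⟩, rfl⟩
    rcases hKsub hp with ⟨⟨hp0, hpε⟩, hpΩ⟩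
    refine ⟨⟨mul_nonneg hs.1 hp0, ?_⟩, hpΩ⟩
    calc s * p.1 ≤ 1 * p.1 := mul_le_mul_of_nonneg_right hs.2 hp0
    _ = p.1 := one_mul _
    _ < ε := hpε
  -- the quantity controlling the t-derivative
  set Q : ℝ × ℝ × ℝ → ℝ := fun p =>
    ((fderiv ℝ r p (1,0,0)) ^ 2 + (fderiv ℝ r p (0,1,0)) ^ 2 + (fderiv ℝ r p (0,0,1)) ^ 2)
      / (2 * r p) with hQdef
  have hfdcont : Continuous fun p => fderiv ℝ r p := hr.continuous_fderiv (by simp)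
  have happ : ∀ v : ℝ × ℝ × ℝ, Continuous fun p => fderiv ℝ r p v := fun v =>
    hfdcont.clm_apply continuous_const
  have hQcont : ContinuousOn Q K' := by
    apply ContinuousOn.div
    · exact (((((happ _).pow 2).add ((happ _).pow 2)).add ((happ _).pow 2))).continuousOn
    · exact (continuous_const.mul hr.continuous).continuousOn
    · intro p hp
      have := hpos p (hK'sub hp)
      positivity
  obtain ⟨M, hM⟩ := hK'comp.exists_bound_of_continuousOn hQcont
  refine ⟨M / 2, ?_⟩
  rintro ⟨t, q⟩ hp
  rcases hKsub hp with ⟨⟨ht0, htε⟩, hqΩ⟩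
  -- the one-variable function
  set f : ℝ → ℝ := fun s => r (s, q) with hfdef
  have hcurve : ∀ s : ℝ, HasDerivAt (fun s : ℝ => ((s, q) : ℝ × ℝ × ℝ))
      ((1, 0, 0) : ℝ × ℝ × ℝ) s := by
    intro s
    have := (hasDerivAt_id s).prodMk (hasDerivAt_const s q)
    exact this
  have hf' : ∀ s : ℝ, HasDerivAt f (fderiv ℝ r (s, q) (1,0,0)) s := fun s =>
    ((hr.differentiable (by simp) (s, q)).hasFDerivAt).comp_hasDerivAt s (hcurve s)
  -- membership of the segment in K'
  have hseg : ∀ s ∈ Set.Icc (0:ℝ) t, ((s, q) : ℝ × ℝ × ℝ) ∈ K' := by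
    intro s hs
    rcases eq_or_lt_of_le ht0 with h | h
    · have ht : t = 0 := h.symm
      have hs0 : s = 0 := le_antisymm (by simpa [ht] using hs.2) hs.1
      exact ⟨(1, (t, q)), ⟨⟨zero_le_one, le_rfl⟩, hp⟩, by simp [hs0, ht]⟩
    · refine ⟨(s / t, (t, q)), ⟨⟨div_nonneg hs.1 ht0, ?_⟩, hp⟩, ?_⟩
      · exact div_le_one_of_le₀ hs.2 ht0
      · simp [div_mul_cancel₀ _ (ne_of_gt h)]
  -- the fencing estimate
  have key : ∀ x ∈ Set.Icc (0:ℝ) t, ‖(fun s => f s - f 0) x‖ ≤ M / 2 * x ^ 2 := by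
    have hB : ∀ x : ℝ, HasDerivAt (fun s : ℝ => M / 2 * s ^ 2) (M * x) x := by
      intro x
      have := ((hasDerivAt_pow 2 x).const_mul (M / 2))
      exact this.congr_deriv (by ring)
    have := image_norm_le_of_norm_deriv_right_le_deriv_boundary
      (f := fun s => f s - f 0) (f' := fun s => fderiv ℝ r (s, q) (1,0,0))
      (a := 0) (b := t)
      (Continuous.continuousOn
        ((hr.continuous.comp (continuous_id.prodMk continuous_const)).sub continuous_const))
      (fun x _ => ((hf' x).sub_const (f 0)).hasDerivWithinAt)
      (B := fun s => M / 2 * s ^ 2) (B' := fun s => M * s)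
      (by simp) hB ?_
    · exact fun x hx => this hx
    · intro x hx
      have hxK' : ((x, q) : ℝ × ℝ × ℝ) ∈ K' := hseg x ⟨hx.1, hx.2.le⟩
      have hxmem : ((x, q) : ℝ × ℝ × ℝ) ∈ Set.Ico (0:ℝ) ε ×ˢ Ω := hK'sub hxK'
      have hrpos := hpos _ hxmem
      have hS : (0:ℝ) ≤ (fderiv ℝ r (x, q) (1,0,0)) ^ 2 + (fderiv ℝ r (x, q) (0,1,0)) ^ 2
          + (fderiv ℝ r (x, q) (0,0,1)) ^ 2 := by positivity
      have hODEx := hODE _ hxmem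
      have hQle : Q (x, q) ≤ M := le_trans (le_abs_self _) (by simpa using hM _ hxK')
      have hQ0 : 0 ≤ Q (x, q) := div_nonneg hS (by linarith)
      have heq : fderiv ℝ r (x, q) (1,0,0) = -(x * Q (x, q)) := by
        rw [hODEx]
        simp only [hQdef]
        field_simp
      show ‖(fderiv ℝ r (x, q)) (1,0,0)‖ ≤ M * x
      rw [heq]
      have : ‖-(x * Q (x, q))‖ = x * Q (x, q) := by
        rw [norm_neg, Real.norm_eq_abs, abs_of_nonneg (mul_nonneg hx.1 hQ0)]
      rw [this]
      calc x * Q (x, q) ≤ x * M := mul_le_mul_of_nonneg_left hQle hx.1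
        _ = M * x := mul_comm _ _
  have := key t ⟨ht0, le_rfl⟩
  have hf0 : f 0 = Real.exp (φ q / 2) := hinit q hqΩ
  simpa [Real.norm_eq_abs, hf0] using this
end
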